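/- Let c > 0, σ₀ > 0, σ_t = σ₀/(1 + c σ₀ t), and let p_t be the solution of dp_t/dt = c σ_t (σ_t - 2 p_t) with p_0 = 0. Then 0 ≤ p_t ≤ σ_t for all t ≥ 0. -/

import Mathlib

/-- If `p` solves `p' = c σ (σ - 2p)`, `p 0 = 0`, with `σ t = σ₀/(1+cσ₀t)`,
then `0 ≤ p t ≤ σ t` for all `t ≥ 0`. -/
theorem stmt_2 (c σ₀ : ℝ) (hc : 0 < c) (hσ₀ : 0 < σ₀)
    (σ : ℝ → ℝ) (hσ : ∀ t, σ t = σ₀ / (1 + c * σ₀ * t))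
    (p : ℝ → ℝ) (hp0 : p 0 = 0)
    (hp : ∀ t : ℝ, 0 ≤ t → HasDerivAt p (c * σ t * (σ t - 2 * p t)) t) :
    ∀ t : ℝ, 0 ≤ t → 0 ≤ p t ∧ p t ≤ σ t := by
  intro t ht
  have hupos : ∀ s : ℝ, 0 ≤ s → (0:ℝ) < 1 + c * σ₀ * s := by
    intro s hs
    have : 0 ≤ c * σ₀ * s := by positivity
    linarith
  set g : ℝ → ℝ := fun s => (1 + c * σ₀ * s)^2 * p s - c * σ₀^2 * s with hg
  have hgderiv : ∀ x : ℝ, 0 ≤ x → HasDerivAt g 0 x := by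
    intro x hx
    have hux : (0:ℝ) < 1 + c * σ₀ * x := hupos x hx
    have hpx := hp x hx
    have h1 : HasDerivAt (fun s : ℝ => (1 + c * σ₀ * s)^2)
        (2 * (1 + c * σ₀ * x) ^ 1 * (c * σ₀)) x := by
      have := ((hasDerivAt_id x).const_mul (c * σ₀)).const_add 1
      simpa using this.fun_pow 2
    have h2 : HasDerivAt (fun s : ℝ => c * σ₀^2 * s) (c * σ₀^2) x := by
      simpa using (hasDerivAt_id x).const_mul (c * σ₀^2)
    have h3 := (h1.mul hpx).sub h2
    have hval : 2 * (1 + c * σ₀ * x) ^ 1 * (c * σ₀) * p x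
        + (1 + c * σ₀ * x)^2 * (c * σ x * (σ x - 2 * p x)) - c * σ₀^2 = 0 := by
      rw [hσ x]
      field_simp
      ring
    rw [hval] at h3
    exact h3
  have hconst : g t = g 0 := by
    apply constant_of_has_deriv_right_zero
      (f := g) (a := 0) (b := t)
    · intro x hx
      exact ((hgderiv x hx.1).continuousAt).continuousWithinAt
    · intro x hx
      exact (hgderiv x hx.1).hasDerivWithinAt
    · exact ⟨ht, le_refl t⟩
  have hg0 : g 0 = 0 := by simp [hg, hp0]
  have hgt : (1 + c * σ₀ * t)^2 * p t = c * σ₀^2 * t := by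
    have := hconst.trans hg0
    simp only [hg] at this
    linarith
  have hut : (0:ℝ) < 1 + c * σ₀ * t := hupos t ht
  have hut2 : (0:ℝ) < (1 + c * σ₀ * t)^2 := by positivity
  constructor
  · have hrhs : 0 ≤ c * σ₀^2 * t := by positivity
    nlinarith [hgt]
  · rw [hσ t]
    rw [le_div_iff₀ hut]
    nlinarith [hgt, hut, hσ₀, hc, ht, mul_nonneg (mul_nonneg hc.le (sq_nonneg σ₀)) ht]
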